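/- The variance-inflated confidence interval is asymptotically conservative: if √n(Î − I*) ⇒ N(0, σ²) when I* > 0 and n·ŜE² → σ² in probability, then the interval [Î ± z_{1−α/2}·ŜE_τ] with ŜE_τ² = ŜE² + τ/n (τ > 0) has asymptotic coverage at least 1−α; in the degenerate case I* = 0 with Î − I* = o_p(n^{-1/2}), the inflated interval has asymptotic coverage tending to 1. -/

import Mathlib

/-!
Inflation only widens the interval, and after scaling by `√n` its half-width is
`z √(n ŜE² + τ)`. If `I* > 0`, then on the event `|n ŜE² − σ²| ≤ τ/2`, whose probability tends
to one, this is at least `z c` with `c = √(σ² + τ/2) > σ`; so coverage is implied, up to an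
asymptotically negligible event, by `|√n (Î − I*)| < z c`. By the portmanteau theorem the
liminf of the probability of the latter is at least `N(0, σ²)(−z c, z c) ≥ N(0, 1)[−z, z] = 1 − α`.
If `I* = 0`, the half-width is at least `z √τ`, and the probability that `√n |Î − I*|` exceeds
it tends to zero.
-/

open MeasureTheory ProbabilityTheory Filter Topology Set
open scoped NNReal ENNReal BoundedContinuousFunction

theorem pos_of_measure_Icc_neg_ne_zero {μ : Measure ℝ} (hμ : μ ≪ volume) {z : ℝ}
    (h : μ (Icc (-z) z) ≠ 0) : 0 < z := by
  by_contra! hz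
  exact h <| hμ <| Set.Subsingleton.measure_zero
    (fun x hx y hy => by linarith [hx.1, hx.2, hy.1, hy.2]) volume

theorem gaussianReal_Icc_le_gaussianReal_Ioo_mul {σ : ℝ≥0} {c z : ℝ} (hσc : σ < c) (hz : 0 < z) :
    gaussianReal 0 1 (Icc (-z) z) ≤ gaussianReal 0 (σ ^ 2) (Ioo (-(c * z)) (c * z)) := by
  have hmap : (gaussianReal 0 1).map (fun x => (σ : ℝ) * x) = gaussianReal 0 (σ ^ 2) := by
    rw [gaussianReal_map_const_mul]
    congr 1
    · ring
    · ext; simp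
  rw [← hmap, Measure.map_apply (measurable_const_mul _) measurableSet_Ioo]
  refine measure_mono fun x hx => ?_
  have hσx : |(σ : ℝ) * x| ≤ σ * z := by
    rw [abs_mul, NNReal.abs_eq]
    exact mul_le_mul_of_nonneg_left (abs_le.2 hx) σ.2
  have : (σ : ℝ) * z < c * z := mul_lt_mul_of_pos_right hσc hz
  exact abs_lt.1 (hσx.trans_lt this)

theorem le_liminf_measure_preimage_of_tendsto_integral_comp {Ω E ι : Type*} [MeasurableSpace Ω]
    [MeasurableSpace E] [TopologicalSpace E] [OpensMeasurableSpace E] [HasOuterApproxClosed E]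
    {L : Filter ι} {P : Measure Ω} [IsProbabilityMeasure P] {ν : Measure E} [IsProbabilityMeasure ν]
    {X : ι → Ω → E} (hX : ∀ i, AEMeasurable (X i) P)
    (hconv : ∀ g : E →ᵇ ℝ, Tendsto (fun i => ∫ ω, g (X i ω) ∂P) L (𝓝 (∫ x, g x ∂ν)))
    {U : Set E} (hU : IsOpen U) :
    ν U ≤ L.liminf fun i => P (X i ⁻¹' U) := by
  let μs : ι → ProbabilityMeasure E :=
    fun i => ⟨P.map (X i), Measure.isProbabilityMeasure_map (hX i)⟩
  have hlim : Tendsto μs L (𝓝 ⟨ν, inferInstance⟩) := by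
    refine ProbabilityMeasure.tendsto_iff_forall_integral_tendsto.2 fun g => ?_
    simpa only [μs, ProbabilityMeasure.coe_mk,
      integral_map (hX _) g.continuous.aestronglyMeasurable] using hconv g
  simpa only [μs, ProbabilityMeasure.coe_mk, Measure.map_apply_of_aemeasurable (hX _)
    hU.measurableSet] using ProbabilityMeasure.le_liminf_measure_open_of_tendsto hlim hU

theorem liminf_measure_le_liminf_measure_of_subset_union {Ω ι : Type*} [MeasurableSpace Ω]
    {P : Measure Ω} {L : Filter ι} {A B E : ι → Set Ω} (hsub : ∀ᶠ i in L, A i ⊆ E i ∪ B i)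
    (hB : Tendsto (fun i => P (B i)) L (𝓝 0)) :
    L.liminf (fun i => P (A i)) ≤ L.liminf (fun i => P (E i)) :=
  calc L.liminf (fun i => P (A i))
      ≤ L.liminf ((fun i => P (E i)) + fun i => P (B i)) :=
        liminf_le_liminf (hsub.mono fun _ h => (measure_mono h).trans (measure_union_le _ _))
    _ = L.liminf (fun i => P (E i)) := ENNReal.liminf_add_of_right_tendsto_zero hB _

theorem toReal_le_liminf_toReal {ι : Type*} {L : Filter ι} [NeBot L] {u : ι → ℝ≥0∞} {a b : ℝ≥0∞}
    (hb : b ≠ ∞) (hu : ∀ i, u i ≤ b) (ha : a ≤ L.liminf u) :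
    a.toReal ≤ L.liminf fun i => (u i).toReal := by
  rw [ENNReal.liminf_toReal_eq hb (.of_forall hu)]
  exact ENNReal.toReal_mono (ne_top_of_le_ne_top hb (liminf_le_of_le (by isBoundedDefault)
    fun _ h => h.exists.elim fun i hi => hi.trans (hu i))) ha

theorem abs_le_mul_sqrt_add_div_iff {n : ℝ} (hn : 0 < n) (d s z τ : ℝ) :
    |d| ≤ z * √(s ^ 2 + τ / n) ↔ √n * |d| ≤ z * √(n * s ^ 2 + τ) := by
  have : √n * (z * √(s ^ 2 + τ / n)) = z * √(n * s ^ 2 + τ) := by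
    rw [mul_left_comm, ← Real.sqrt_mul hn.le, mul_add, mul_div_cancel₀ _ hn.ne']
  rw [← this, mul_le_mul_iff_right₀ (Real.sqrt_pos.2 hn)]

section InflatedInterval

variable {Ω : Type*} [MeasurableSpace Ω] {P : Measure Ω} [IsProbabilityMeasure P]
  {θ z τ : ℝ} {I SE : ℕ → Ω → ℝ}

theorem gaussianReal_Icc_le_liminf_measure_inflated_coverage (hI : ∀ n, Measurable (I n))
    (hz : 0 < z) (hτ : 0 < τ) {σ : ℝ≥0}
    (hclt : ∀ g : ℝ →ᵇ ℝ, Tendsto (fun n : ℕ => ∫ ω, g (√n * (I n ω - θ)) ∂P) atTop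
      (𝓝 (∫ x, g x ∂(gaussianReal 0 (σ ^ 2)))))
    (hSE : ∀ δ : ℝ, 0 < δ →
      Tendsto (fun n : ℕ => P {ω | δ < |(n : ℝ) * SE n ω ^ 2 - (σ : ℝ) ^ 2|}) atTop (𝓝 0)) :
    gaussianReal 0 1 (Icc (-z) z) ≤
      atTop.liminf fun n : ℕ => P {ω | |I n ω - θ| ≤ z * √(SE n ω ^ 2 + τ / n)} := by
  set c := √((σ : ℝ) ^ 2 + τ / 2)
  have hσc : (σ : ℝ) < c := (Real.lt_sqrt σ.coe_nonneg).2 (by linarith)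
  calc gaussianReal 0 1 (Icc (-z) z) ≤ gaussianReal 0 (σ ^ 2) (Ioo (-(c * z)) (c * z)) :=
        gaussianReal_Icc_le_gaussianReal_Ioo_mul hσc hz
    _ ≤ atTop.liminf fun n : ℕ => P ((fun ω => √n * (I n ω - θ)) ⁻¹' Ioo (-(c * z)) (c * z)) :=
        le_liminf_measure_preimage_of_tendsto_integral_comp
          (fun n => (((hI n).sub_const θ).const_mul _).aemeasurable) hclt isOpen_Ioo
    _ ≤ _ := liminf_measure_le_liminf_measure_of_subset_union ?_ (hSE (τ / 2) (by positivity))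
  filter_upwards [eventually_gt_atTop 0] with n hn ω hω
  refine or_iff_not_imp_right.2 fun hvar => ?_
  simp only [mem_ofPred_eq, not_lt, mem_preimage, mem_Ioo] at hω hvar ⊢
  rw [abs_le_mul_sqrt_add_div_iff (Nat.cast_pos.2 hn)]
  have hc : c ≤ √(n * SE n ω ^ 2 + τ) := Real.sqrt_le_sqrt (by linarith [(abs_le.1 hvar).1])
  calc √n * |I n ω - θ| = |√n * (I n ω - θ)| := by
        rw [abs_mul, abs_of_nonneg (Real.sqrt_nonneg _)]
    _ ≤ c * z := (abs_lt.2 hω).le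
    _ ≤ z * √(n * SE n ω ^ 2 + τ) := by
        rw [mul_comm]
        exact mul_le_mul_of_nonneg_left hc hz.le

theorem tendsto_measureReal_inflated_coverage_one (hI : ∀ n, Measurable (I n))
    (hz : 0 < z) (hτ : 0 < τ)
    (hcons : ∀ δ : ℝ, 0 < δ →
      Tendsto (fun n : ℕ => P {ω | δ < √n * |I n ω - θ|}) atTop (𝓝 0)) :
    Tendsto (fun n : ℕ => P.real {ω | |I n ω - θ| ≤ z * √(SE n ω ^ 2 + τ / n)}) atTop (𝓝 1) := by
  set B := fun n : ℕ => {ω | z * √τ < √n * |I n ω - θ|}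
  have hBmeas (n : ℕ) : MeasurableSet (B n) :=
    measurableSet_lt measurable_const (((hI n).sub_const θ).abs.const_mul _)
  have hB : Tendsto (fun n => P.real (B n)) atTop (𝓝 0) :=
    (ENNReal.tendsto_toReal ENNReal.zero_ne_top).comp (hcons _ (by positivity))
  have hlower : ∀ᶠ n : ℕ in atTop,
      1 - P.real (B n) ≤ P.real {ω | |I n ω - θ| ≤ z * √(SE n ω ^ 2 + τ / n)} := by
    filter_upwards [eventually_gt_atTop 0] with n hn
    rw [← probReal_compl_eq_one_sub (hBmeas n)]
    refine measureReal_mono fun ω hω => ?_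
    simp only [B, mem_compl_iff, mem_ofPred_eq, not_lt] at hω ⊢
    rw [abs_le_mul_sqrt_add_div_iff (Nat.cast_pos.2 hn)]
    exact hω.trans (mul_le_mul_of_nonneg_left
      (Real.sqrt_le_sqrt (le_add_of_nonneg_left (by positivity))) hz.le)
  exact tendsto_of_tendsto_of_tendsto_of_le_of_le' (by simpa using hB.const_sub 1)
    tendsto_const_nhds hlower (.of_forall fun _ => measureReal_le_one)

end InflatedInterval

theorem stmt_18_general {Ω : Type*} [MeasurableSpace Ω]
    (P : Measure Ω) [IsProbabilityMeasure P]
    (Istar : ℝ) (I SE : ℕ → Ω → ℝ)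
    (hImeas : ∀ n, Measurable (I n))
    (τ α : ℝ) (hτ : 0 < τ) (hα : α ∈ Set.Ioo (0 : ℝ) 1)
    (z : ℝ) (hz : (gaussianReal 0 1) (Set.Icc (-z) z) = ENNReal.ofReal (1 - α)) :
    ((0 < Istar → ∀ σ : NNReal, 0 < σ →
        (∀ g : BoundedContinuousFunction ℝ ℝ,
          Tendsto (fun n : ℕ => ∫ ω, g (Real.sqrt n * (I n ω - Istar)) ∂P) atTop
            (nhds (∫ x, g x ∂(gaussianReal 0 (σ ^ 2))))) →
        (∀ δ : ℝ, 0 < δ →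
          Tendsto (fun n : ℕ =>
            P {ω | δ < |(n : ℝ) * SE n ω ^ 2 - (σ : ℝ) ^ 2|}) atTop (nhds 0)) →
        (1 - α : ℝ) ≤ atTop.liminf (fun n : ℕ =>
          (P {ω | |I n ω - Istar| ≤ z * Real.sqrt (SE n ω ^ 2 + τ / n)}).toReal))) ∧
      (Istar = 0 →
        (∀ δ : ℝ, 0 < δ →
          Tendsto (fun n : ℕ =>
            P {ω | δ < Real.sqrt n * |I n ω - Istar|}) atTop (nhds 0)) →
        Tendsto (fun n : ℕ =>
          (P {ω | |I n ω - Istar| ≤ z * Real.sqrt (SE n ω ^ 2 + τ / n)}).toReal)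
          atTop (nhds 1)) := by
  obtain ⟨-, hα1⟩ := hα
  have hz0 : 0 < z := pos_of_measure_Icc_neg_ne_zero
    (gaussianReal_absolutelyContinuous 0 one_ne_zero)
    (by rw [hz]; exact (ENNReal.ofReal_pos.2 (by linarith)).ne')
  refine ⟨fun _ σ _ hclt hSE => ?_, fun _ hcons =>
    tendsto_measureReal_inflated_coverage_one hImeas hz0 hτ hcons⟩
  have := toReal_le_liminf_toReal ENNReal.one_ne_top (fun _ => prob_le_one)
    (gaussianReal_Icc_le_liminf_measure_inflated_coverage hImeas hz0 hτ hclt hSE)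
  rwa [hz, ENNReal.toReal_ofReal (by linarith)] at this

/-- The variance-inflated confidence interval is asymptotically conservative.
Case 1: if `I* > 0`, `√n(Î_n − I*) ⇒ N(0, σ²)` (weak convergence expressed by testing
against bounded continuous functions) and `n ŜE_n² → σ²` in probability, then the
interval `[Î_n ± z_{1−α/2} √(ŜE_n² + τ/n)]` has asymptotic coverage at least `1 − α`.
Case 2: if `I* = 0` and `√n(Î_n − I*) → 0` in probability, the coverage tends to `1`. -/
theorem stmt_18 {Ω : Type*} [MeasurableSpace Ω]
    (P : Measure Ω) [IsProbabilityMeasure P]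
    (Istar : ℝ) (I SE : ℕ → Ω → ℝ)
    (hImeas : ∀ n, Measurable (I n)) (hSEmeas : ∀ n, Measurable (SE n))
    (hSEnonneg : ∀ n ω, 0 ≤ SE n ω)
    (τ α : ℝ) (hτ : 0 < τ) (hα : α ∈ Set.Ioo (0 : ℝ) 1)
    (z : ℝ) (hz : (gaussianReal 0 1) (Set.Icc (-z) z) = ENNReal.ofReal (1 - α)) :
    ((0 < Istar → ∀ σ : NNReal, 0 < σ →
        (∀ g : BoundedContinuousFunction ℝ ℝ,
          Tendsto (fun n : ℕ => ∫ ω, g (Real.sqrt n * (I n ω - Istar)) ∂P) atTop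
            (nhds (∫ x, g x ∂(gaussianReal 0 (σ ^ 2))))) →
        (∀ δ : ℝ, 0 < δ →
          Tendsto (fun n : ℕ =>
            P {ω | δ < |(n : ℝ) * SE n ω ^ 2 - (σ : ℝ) ^ 2|}) atTop (nhds 0)) →
        (1 - α : ℝ) ≤ atTop.liminf (fun n : ℕ =>
          (P {ω | |I n ω - Istar| ≤ z * Real.sqrt (SE n ω ^ 2 + τ / n)}).toReal))) ∧
      (Istar = 0 →
        (∀ δ : ℝ, 0 < δ →
          Tendsto (fun n : ℕ =>
            P {ω | δ < Real.sqrt n * |I n ω - Istar|}) atTop (nhds 0)) →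
        Tendsto (fun n : ℕ =>
          (P {ω | |I n ω - Istar| ≤ z * Real.sqrt (SE n ω ^ 2 + τ / n)}).toReal)
          atTop (nhds 1)) :=
  stmt_18_general P Istar I SE hImeas τ α hτ hα z hz
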